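/- arXiv:math/0312003 — 4 statements merged into one kernel-verified Lean document; each statement's English description precedes it below -/
import Mathlib

section
/- Let X = {x, y₁, y₂, y₃} be the four-element metric space with ρ(x, yᵢ) = 1/2 for all i and ρ(yⱼ, y_k) = 1 for distinct j, k, and let Y = {y₁, y₂, y₃}. Let f : Y → ℂ be an isometric map (so the points f(y₁), f(y₂), f(y₃) form an equilateral triangle of side length 1 in ℂ). Then every extension of f to a function on X has Lipschitz constant at least 2/√3. -/
set_option maxHeartbeats 1000000 in
/-- Weaver's four-point example: let `X = {x, y₁, y₂, y₃}` with `ρ(x, yᵢ) = 1/2` and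
`ρ(yⱼ, y_k) = 1` for `j ≠ k`, and let `f : {y₁, y₂, y₃} → ℂ` be isometric, with values
`f₁, f₂, f₃` pairwise at distance `1`. Then any extension of `f` to `X`, with value `c`
at `x`, has Lipschitz constant `L` at least `2/√3`: if `dist c fᵢ ≤ L · (1/2)` for all
`i` (and the `y`-pairs constraints `dist fⱼ f_k ≤ L · 1` hold automatically for such `L`),
then `L ≥ 2/√3`. -/
theorem four_point_extension_lipschitz_lower_bound
    (f₁ f₂ f₃ c : ℂ) (L : ℝ)
    (h12 : dist f₁ f₂ = 1) (h13 : dist f₁ f₃ = 1) (h23 : dist f₂ f₃ = 1)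
    (hc1 : dist c f₁ ≤ L * (1 / 2))
    (hc2 : dist c f₂ ≤ L * (1 / 2))
    (hc3 : dist c f₃ ≤ L * (1 / 2)) :
    2 / Real.sqrt 3 ≤ L := by
  have hL : 0 ≤ L := by
    have := dist_triangle f₁ c f₂
    rw [dist_comm f₁ c] at this
    nlinarith [dist_nonneg (x := c) (y := f₁), dist_nonneg (x := c) (y := f₂)]
  -- squared distance equalities
  have sq_of_eq : ∀ z w : ℂ, dist z w = 1 →
      (z.re - w.re)^2 + (z.im - w.im)^2 = 1 := by
    intro z w h
    rw [Complex.dist_eq_re_im] at h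
    have h' := congrArg (· ^ 2) h
    simpa [Real.sq_sqrt (by positivity : (0:ℝ) ≤ (z.re - w.re)^2 + (z.im - w.im)^2)]
      using h'
  have e12 := sq_of_eq _ _ h12
  have e13 := sq_of_eq _ _ h13
  have e23 := sq_of_eq _ _ h23
  have sq_of_le : ∀ w : ℂ, dist c w ≤ L * (1/2) →
      (c.re - w.re)^2 + (c.im - w.im)^2 ≤ (L/2)^2 := by
    intro w h
    rw [Complex.dist_eq_re_im] at h
    have h2 : (Real.sqrt ((c.re - w.re)^2 + (c.im - w.im)^2))^2 ≤ (L * (1/2))^2 := by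
      have hnn : (0:ℝ) ≤ Real.sqrt ((c.re - w.re)^2 + (c.im - w.im)^2) := Real.sqrt_nonneg _
      nlinarith
    rw [Real.sq_sqrt (by positivity)] at h2
    linarith [h2]
  have q1 := sq_of_le _ hc1
  have q2 := sq_of_le _ hc2
  have q3 := sq_of_le _ hc3
  -- key: 3 * (L/2)^2 ≥ 1
  have key : (4:ℝ)/3 ≤ L^2 := by
    have iden : 3*(((c.re - f₁.re)^2 + (c.im - f₁.im)^2)
        + ((c.re - f₂.re)^2 + (c.im - f₂.im)^2)
        + ((c.re - f₃.re)^2 + (c.im - f₃.im)^2))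
        = (3*c.re - (f₁.re + f₂.re + f₃.re))^2
          + (3*c.im - (f₁.im + f₂.im + f₃.im))^2
          + (((f₁.re - f₂.re)^2 + (f₁.im - f₂.im)^2)
            + ((f₁.re - f₃.re)^2 + (f₁.im - f₃.im)^2)
            + ((f₂.re - f₃.re)^2 + (f₂.im - f₃.im)^2)) := by ring
    linarith [sq_nonneg (3*c.re - (f₁.re + f₂.re + f₃.re)),
      sq_nonneg (3*c.im - (f₁.im + f₂.im + f₃.im)), iden, q1, q2, q3, e12, e13, e23]
  have h3 : (0:ℝ) < Real.sqrt 3 := Real.sqrt_pos.mpr (by norm_num)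
  have hs : Real.sqrt 3 ^ 2 = 3 := Real.sq_sqrt (by norm_num)
  rw [div_le_iff₀ h3]
  nlinarith [key, hs, mul_nonneg hL h3.le]
end

section
/- Let A be an order-unit space with state space S(A), and let (𝔛_n) be a net of nonempty closed convex subsets of S(A) with restriction maps π_n : A → Af_ℝ(𝔛_n). If ‖a‖ = lim_n ‖π_n(a)‖ for all a ∈ A, then 𝔛_n converges to S(A) in the Hausdorff topology on closed subsets of S(A). -/
open Filter Topology

/-!
If the distances did not tend to `0`, compactness of the hyperspace of nonempty compact subsets
of `K` would give a finer ultrafilter along which `𝔛 i` converges to a compact `Y ⊆ K` with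
`ε ≤ hausdorffDist Y K`. As a Hausdorff limit of convex sets `Y` is convex, and since suprema
of Lipschitz functions can only drop in a Hausdorff limit, `sup_K |g| ≤ sup_Y |g|` for every
continuous affine `g`. A point of `K \ Y` would be strictly separated from `Y` by a continuous
linear functional, which after subtracting its minimum over `K` violates this inequality;
hence `Y = K`, a contradiction.
-/

open Metric Set TopologicalSpace

theorem Convex.of_tendsto_hausdorffEDist {E ι : Type*} [SeminormedAddCommGroup E]
    [NormedSpace ℝ E] {l : Filter ι} [l.NeBot] {s : ι → Set E} {t : Set E}
    (hs : ∀ i, Convex ℝ (s i)) (ht : IsClosed t)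
    (hlim : Tendsto (fun i => hausdorffEDist (s i) t) l (𝓝 0)) : Convex ℝ t := by
  intro y hy z hz a b ha hb hab
  rw [← ht.closure_eq, closure_eq_iInter_cthickening]
  refine mem_iInter₂.2 fun δ hδ => ?_
  have hδ₂ : 0 < δ / 2 := half_pos hδ
  obtain ⟨i, hi⟩ := (hlim.eventually (gt_mem_nhds (ENNReal.ofReal_pos.2 hδ₂))).exists
  have hts : t ⊆ Metric.cthickening (δ / 2) (s i) := fun x hx => mem_cthickening_iff.2 <|
    ((infEDist_le_hausdorffEDist_of_mem hx).trans_eq hausdorffEDist_comm).trans hi.le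
  have hst : s i ⊆ Metric.cthickening (δ / 2) t := fun x hx => mem_cthickening_iff.2 <|
    (infEDist_le_hausdorffEDist_of_mem hx).trans hi.le
  have hw : a • y + b • z ∈ Metric.cthickening (δ / 2) (s i) :=
    (hs i).cthickening _ (hts hy) (hts hz) ha hb hab
  have hcc : Metric.cthickening (δ / 2) (Metric.cthickening (δ / 2) t) ⊆
      Metric.cthickening δ t := by
    simpa only [add_halves] using cthickening_cthickening_subset hδ₂.le hδ₂.le t
  exact hcc (cthickening_subset_of_subset _ hst hw)

theorem LipschitzWith.sSup_image_le_add_hausdorffDist {α : Type*} [PseudoMetricSpace α]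
    {φ : α → ℝ} {L : NNReal} (hφ : LipschitzWith L φ) {s t : Set α} (hs : s.Nonempty)
    (ht : IsCompact t) (hst : hausdorffEDist s t ≠ ⊤) :
    sSup (φ '' s) ≤ sSup (φ '' t) + L * hausdorffDist s t := by
  have htne : t.Nonempty := nonempty_iff_ne_empty.2 fun h => hst (h ▸ hausdorffEDist_empty hs)
  refine csSup_le (hs.image φ) ?_
  rintro _ ⟨x, hx, rfl⟩
  obtain ⟨y, hy, hxy⟩ := ht.exists_infDist_eq_dist htne x
  have hyt : φ y ≤ sSup (φ '' t) := le_csSup (ht.image hφ.continuous).bddAbove ⟨y, hy, rfl⟩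
  have hxt : dist x y ≤ hausdorffDist s t := hxy ▸ infDist_le_hausdorffDist_of_mem hx hst
  calc φ x ≤ φ y + L * dist x y := by
        linarith [(le_abs_self _).trans (hφ.dist_le_mul x y)]
    _ ≤ sSup (φ '' t) + L * hausdorffDist s t :=
        add_le_add hyt (mul_le_mul_of_nonneg_left hxt L.2)

theorem AffineMap.exists_lipschitzWith_abs {E : Type*} [SeminormedAddCommGroup E]
    [NormedSpace ℝ E] {g : E →ᵃ[ℝ] ℝ} (hg : Continuous g) :
    ∃ L, LipschitzWith L fun x => |g x| := by
  let f : E →L[ℝ] ℝ := ⟨g.linear, AffineMap.continuous_linear_iff.2 hg⟩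
  refine ⟨‖f‖₊, LipschitzWith.of_dist_le_mul fun x y => ?_⟩
  calc dist |g x| |g y| ≤ |g x - g y| := abs_abs_sub_abs_le_abs_sub _ _
    _ = ‖f (x - y)‖ := by rw [Real.norm_eq_abs, ← vsub_eq_sub, ← g.linearMap_vsub]; rfl
    _ ≤ ‖f‖ * dist x y := dist_eq_norm x y ▸ f.le_opNorm _

theorem subset_of_forall_sSup_abs_le {E : Type*} [AddCommGroup E] [Module ℝ E]
    [TopologicalSpace E] [IsTopologicalAddGroup E] [ContinuousSMul ℝ E]
    [LocallyConvexSpace ℝ E] {K Y : Set E} (hK : IsCompact K) (hY : IsClosed Y)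
    (hYconv : Convex ℝ Y) (hYne : Y.Nonempty) (hYK : Y ⊆ K)
    (h : ∀ g : E →ᵃ[ℝ] ℝ, Continuous g →
      sSup ((fun x => |g x|) '' K) ≤ sSup ((fun x => |g x|) '' Y)) :
    K ⊆ Y := by
  intro x hxK
  by_contra hxY
  obtain ⟨f, t, hfY, htx⟩ := geometric_hahn_banach_closed_point hYconv hY hxY
  obtain ⟨m, -, hm⟩ := hK.exists_isMinOn ⟨x, hxK⟩ f.continuous.continuousOn
  -- Shifting `f` by its minimum on `K` makes it nonnegative there, so `|g| = g` on `K`.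
  let g : E →ᵃ[ℝ] ℝ := f.toLinearMap.toAffineMap - AffineMap.const ℝ E (f m)
  have hgc : Continuous g := f.continuous.sub continuous_const
  have hg : ∀ z ∈ K, |g z| = f z - f m := fun z hz => abs_of_nonneg (sub_nonneg.2 (hm hz))
  have hgY : sSup ((fun x => |g x|) '' Y) ≤ t - f m := by
    refine csSup_le (hYne.image _) ?_
    rintro _ ⟨y, hy, rfl⟩
    dsimp only
    rw [hg y (hYK hy)]
    linarith [hfY y hy]
  have hgK : f x - f m ≤ sSup ((fun x => |g x|) '' K) :=
    hg x hxK ▸ le_csSup (hK.image (continuous_abs.comp hgc)).bddAbove ⟨x, hxK, rfl⟩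
  linarith [h g hgc]

theorem exists_ultrafilter_tendsto_hausdorffEDist {α ι : Type*} [EMetricSpace α]
    {K : Set α} (hK : IsCompact K) (l : Filter ι) [l.NeBot] {s : ι → Set α}
    (hne : ∀ i, (s i).Nonempty) (hc : ∀ i, IsCompact (s i)) (hsK : ∀ i, s i ⊆ K) :
    ∃ u : Ultrafilter ι, ↑u ≤ l ∧ ∃ t : Set α, t.Nonempty ∧ IsCompact t ∧ t ⊆ K ∧
      Tendsto (fun i => hausdorffEDist (s i) t) u (𝓝 0) := by
  let F : ι → NonemptyCompacts α := fun i => ⟨⟨s i, hc i⟩, hne i⟩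
  let u := Ultrafilter.of l
  obtain ⟨t, htK, hFt⟩ := (NonemptyCompacts.isCompact_subsets_of_isCompact hK).ultrafilter_le_nhds
    (u.map F) (le_principal_iff.2 (mem_map.2 (univ_mem' hsK)))
  exact ⟨u, Ultrafilter.of_le l, t, t.nonempty, t.isCompact, htK,
    tendsto_iff_edist_tendsto_0.1 hFt⟩

theorem state_space_hausdorff_convergence_general
    {E : Type*} [NormedAddCommGroup E] [NormedSpace ℝ E]
    (K : Set E) (hKc : IsCompact K)
    {ι : Type*} (l : Filter ι)
    (𝔛 : ι → Set E)
    (h𝔛 : ∀ i, (𝔛 i).Nonempty ∧ IsClosed (𝔛 i) ∧ Convex ℝ (𝔛 i) ∧ 𝔛 i ⊆ K)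
    (hnorm : ∀ f : E →ᵃ[ℝ] ℝ, Continuous f →
      Tendsto (fun i => sSup ((fun x => |f x|) '' (𝔛 i))) l
        (𝓝 (sSup ((fun x => |f x|) '' K)))) :
    Tendsto (fun i => Metric.hausdorffDist (𝔛 i) K) l (𝓝 0) := by
  refine tendsto_order.2 ⟨fun a ha => .of_forall fun i => ha.trans_le hausdorffDist_nonneg,
    fun ε hε => ?_⟩
  by_contra hfar
  set far := {i | ε ≤ hausdorffDist (𝔛 i) K}
  have : (l ⊓ 𝓟 far).NeBot := by
    simpa [frequently_iff_neBot, not_eventually] using hfar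
  obtain ⟨u, hu, Y, hYne, hYc, hYK, hY⟩ := exists_ultrafilter_tendsto_hausdorffEDist hKc
    (l ⊓ 𝓟 far) (fun i => (h𝔛 i).1)
    (fun i => hKc.of_isClosed_subset (h𝔛 i).2.1 (h𝔛 i).2.2.2) (fun i => (h𝔛 i).2.2.2)
  have hfin : ∀ i, hausdorffEDist (𝔛 i) Y ≠ ⊤ := fun i =>
    hausdorffEDist_ne_top_of_nonempty_of_bounded (h𝔛 i).1 hYne
      (hKc.isBounded.subset (h𝔛 i).2.2.2) hYc.isBounded
  have hYdist : Tendsto (fun i => hausdorffDist (𝔛 i) Y) u (𝓝 0) :=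
    (ENNReal.tendsto_toReal ENNReal.zero_ne_top).comp hY
  have hYconv : Convex ℝ Y :=
    Convex.of_tendsto_hausdorffEDist (fun i => (h𝔛 i).2.2.1) hYc.isClosed hY
  have hYnorming : ∀ g : E →ᵃ[ℝ] ℝ, Continuous g →
      sSup ((fun x => |g x|) '' K) ≤ sSup ((fun x => |g x|) '' Y) := fun g hg => by
    obtain ⟨L, hL⟩ := AffineMap.exists_lipschitzWith_abs hg
    refine le_of_tendsto_of_tendsto ((hnorm g hg).mono_left (hu.trans inf_le_left))
      (by simpa using tendsto_const_nhds.add (hYdist.const_mul (L : ℝ))) ?_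
    exact .of_forall fun i => hL.sSup_image_le_add_hausdorffDist (h𝔛 i).1 hYc (hfin i)
  have hKY : K ⊆ Y := subset_of_forall_sSup_abs_le hKc hYc.isClosed hYconv hYne hYK hYnorming
  rw [hYK.antisymm hKY] at hYdist
  exact hε.not_ge (ge_of_tendsto hYdist (hu.trans inf_le_right (mem_principal_self far)))

/-- Kadison representation form of the state-space convergence lemma: let `K` be a
nonempty compact convex subset of a real normed space (representing the state space of an
order-unit space, with the order-unit space represented as the continuous affine
functions on `K`), and let `(𝔛 i)` be a net of nonempty closed convex subsets of `K`
(indexed by a filter `l ≠ ⊥`). If for every continuous affine function `f` the supremum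
norms satisfy `sup_{𝔛 i} |f| → sup_K |f|`, then `𝔛 i → K` in the Hausdorff topology. -/
theorem state_space_hausdorff_convergence
    {E : Type*} [NormedAddCommGroup E] [NormedSpace ℝ E]
    (K : Set E) (hKc : IsCompact K) (hKconv : Convex ℝ K) (hKne : K.Nonempty)
    {ι : Type*} (l : Filter ι) [l.NeBot]
    (𝔛 : ι → Set E)
    (h𝔛 : ∀ i, (𝔛 i).Nonempty ∧ IsClosed (𝔛 i) ∧ Convex ℝ (𝔛 i) ∧ 𝔛 i ⊆ K)
    (hnorm : ∀ f : E →ᵃ[ℝ] ℝ, Continuous f →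
      Tendsto (fun i => sSup ((fun x => |f x|) '' (𝔛 i))) l
        (𝓝 (sSup ((fun x => |f x|) '' K)))) :
    Tendsto (fun i => Metric.hausdorffDist (𝔛 i) K) l (𝓝 0) :=
  state_space_hausdorff_convergence_general K hKc l 𝔛 h𝔛 hnorm
end

section
/- Let X₀ be a solid equilateral triangle in ℂ with side length 1 and center at the origin. Subdivide X₀ into 4ⁿ congruent equilateral sub-triangles of side length 1/2ⁿ. Let g : X₀ → ℂ be a map that is affine on each sub-triangle S and satisfies: for each sub-triangle S with barycenter y there is a point c_S ∈ ℂ such that g(S) is contained in the closed disk of radius 1/2^{n+1} centered at c_S. Then the area of g(X₀) is at most 3/4 times the area of X₀. -/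
/-!
Every triangle `convexHull ℝ {a, b, c}` is an affine image of the standard triangle
`T = convexHull ℝ {0, 1, I}`, so its area is `|ω (b - a) (c - a)| · area T`, where `ω` is the
area form of `ℂ`. The unit equilateral triangle has `|ω| = √3 / 2`, while a triangle inscribed
in a disk of radius `ρ` has `|ω| ≤ 3√3/2 · ρ²` (a sum-of-squares bound). With `ρ = 1 / 2^(n+1)`
the `4^n` pieces of `g(X₀)` then have total area at most `3/4 · (√3/2) · area T`, and the area
of `T` itself never has to be computed.
-/

open MeasureTheory Complex Set Metric Pointwise

attribute [local instance] Complex.finrank_real_complex_fact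

local notation "ω" => Complex.orientation.areaForm

theorem Orientation.abs_areaForm_of_norm_eq {E : Type*} [NormedAddCommGroup E]
    [InnerProductSpace ℝ E] [Fact (Module.finrank ℝ E = 2)] (o : Orientation ℝ E (Fin 2))
    {u v : E} {d : ℝ} (hu : ‖u‖ = d) (hv : ‖v‖ = d) (huv : ‖u - v‖ = d) :
    |o.areaForm u v| = √3 / 2 * d ^ 2 := by
  have hd : 0 ≤ d := hu ▸ norm_nonneg u
  have hinner : inner ℝ u v = d ^ 2 / 2 := by
    have := norm_sub_sq_real u v
    rw [hu, hv, huv] at this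
    linarith
  have hsq : o.areaForm u v ^ 2 = (√3 / 2 * d ^ 2) ^ 2 := by
    have := o.inner_sq_add_areaForm_sq u v
    rw [hinner, hu, hv] at this
    rw [mul_pow, div_pow, Real.sq_sqrt zero_le_three]
    linarith
  rw [(sq_eq_sq_iff_abs_eq_abs _ _).1 hsq, abs_of_nonneg (by positivity)]

theorem Complex.areaForm_sub_le_sum_norm_sq (a b c : ℂ) :
    ω (b - a) (c - a) ≤ √3 / 2 * (‖a‖ ^ 2 + ‖b‖ ^ 2 + ‖c‖ ^ 2) := by
  have hs : √3 ^ 2 = 3 := Real.sq_sqrt zero_le_three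
  simp only [Complex.areaForm, Complex.sq_norm, normSq_apply, mul_im, conj_re, conj_im, sub_re,
    sub_im]
  -- The squares are `‖a + b + c‖²` and `‖2a - b - c + √3 I (b - c)‖²`; both vanish exactly
  -- when `a, b, c` is a positively oriented equilateral triangle centred at `0`.
  have hsos : √3 / 2 * (a.re * a.re + a.im * a.im + (b.re * b.re + b.im * b.im)
        + (c.re * c.re + c.im * c.im))
      - ((b.re - a.re) * (c.im - a.im) + -(b.im - a.im) * (c.re - a.re)) =
      √3 / 6 * ((a.re + b.re + c.re) ^ 2 + (a.im + b.im + c.im) ^ 2)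
        + √3 / 12 * ((2 * a.re - b.re - c.re - √3 * (b.im - c.im)) ^ 2
          + (2 * a.im - b.im - c.im + √3 * (b.re - c.re)) ^ 2) := by
    linear_combination (-(√3 * ((c.im - b.im) ^ 2 + (b.re - c.re) ^ 2)) / 12
      + (a.re * b.im - a.im * b.re + b.re * c.im - b.im * c.re + c.re * a.im - c.im * a.re) / 3)
      * hs
  rw [← sub_nonneg, hsos]
  positivity

theorem Complex.abs_areaForm_sub_le_of_mem_closedBall {a b c z : ℂ} {r : ℝ}
    (ha : a ∈ closedBall z r) (hb : b ∈ closedBall z r) (hc : c ∈ closedBall z r) :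
    |ω (b - a) (c - a)| ≤ 3 * √3 / 2 * r ^ 2 := by
  have hle : ∀ x ∈ closedBall z r, ∀ y ∈ closedBall z r, ∀ w ∈ closedBall z r,
      ω (y - x) (w - x) ≤ 3 * √3 / 2 * r ^ 2 := by
    intro x hx y hy w hw
    calc ω (y - x) (w - x) = ω ((y - z) - (x - z)) ((w - z) - (x - z)) := by
          simp only [sub_sub_sub_cancel_right]
      _ ≤ √3 / 2 * (‖x - z‖ ^ 2 + ‖y - z‖ ^ 2 + ‖w - z‖ ^ 2) := areaForm_sub_le_sum_norm_sq _ _ _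
      _ ≤ √3 / 2 * (r ^ 2 + r ^ 2 + r ^ 2) := by gcongr <;> exact mem_closedBall_iff_norm.1 ‹_›
      _ = 3 * √3 / 2 * r ^ 2 := by ring
  refine abs_le.2 ⟨?_, hle a ha b hb c hc⟩
  rw [Complex.orientation.areaForm_swap]
  linarith [hle a ha c hc b hb]

theorem Complex.volume_convexHull_triangle (a b c : ℂ) :
    volume (convexHull ℝ {a, b, c}) =
      ENNReal.ofReal |ω (b - a) (c - a)| * volume (convexHull ℝ {0, 1, I}) := by
  set L := basisOneI.constr ℝ ![b - a, c - a]
  have hdet : LinearMap.det L = ω (b - a) (c - a) := by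
    rw [Complex.orientation.areaForm_to_volumeForm,
      Complex.orientation.volumeForm_robust Complex.orthonormalBasisOneI rfl,
      toBasis_orthonormalBasisOneI, ← mul_one (LinearMap.det L), ← basisOneI.det_self,
      ← Module.Basis.det_comp]
    congr 1
    ext i
    fin_cases i <;> simp [L]
  have himage : convexHull ℝ {a, b, c} = a +ᵥ L '' convexHull ℝ {0, 1, I} := by
    rw [LinearMap.image_convexHull, ← convexHull_vadd]
    simp [L, image_insert_eq, vadd_set_insert]
  rw [himage, measure_vadd, Measure.addHaar_image_linearMap, hdet]

theorem Complex.volume_convexHull_le_of_mem_closedBall {a b c z : ℂ} {r : ℝ}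
    (ha : a ∈ closedBall z r) (hb : b ∈ closedBall z r) (hc : c ∈ closedBall z r) :
    volume (convexHull ℝ {a, b, c}) ≤
      ENNReal.ofReal (3 * √3 / 2 * r ^ 2) * volume (convexHull ℝ {0, 1, I}) := by
  rw [volume_convexHull_triangle]
  gcongr
  exact abs_areaForm_sub_le_of_mem_closedBall ha hb hc

theorem Complex.volume_image_convexHull_le_of_eqOn_affineMap {g : ℂ → ℂ} {f : ℂ →ᵃ[ℝ] ℂ}
    {p q r z : ℂ} {ρ : ℝ} (hf : EqOn g f (convexHull ℝ {p, q, r}))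
    (hg : g '' convexHull ℝ {p, q, r} ⊆ closedBall z ρ) :
    volume (g '' convexHull ℝ {p, q, r}) ≤
      ENNReal.ofReal (3 * √3 / 2 * ρ ^ 2) * volume (convexHull ℝ {0, 1, I}) := by
  rw [hf.image_eq] at hg ⊢
  have hvertex : ∀ x ∈ ({p, q, r} : Set ℂ), f x ∈ closedBall z ρ := fun x hx =>
    hg (mem_image_of_mem f (subset_convexHull ℝ _ hx))
  rw [AffineMap.image_convexHull, image_insert_eq, image_insert_eq, image_singleton]
  exact volume_convexHull_le_of_mem_closedBall (hvertex p (by simp)) (hvertex q (by simp))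
    (hvertex r (by simp))

theorem Complex.volume_convexHull_of_dist_eq {a b c : ℂ} {d : ℝ}
    (hab : dist a b = d) (hbc : dist b c = d) (hac : dist a c = d) :
    volume (convexHull ℝ {a, b, c}) =
      ENNReal.ofReal (√3 / 2 * d ^ 2) * volume (convexHull ℝ {0, 1, I}) := by
  rw [volume_convexHull_triangle, Complex.orientation.abs_areaForm_of_norm_eq
    (by rw [← dist_eq, dist_comm, hab]) (by rw [← dist_eq, dist_comm, hac])
    (by rw [sub_sub_sub_cancel_right, ← dist_eq, hbc])]

theorem affine_image_area_bound_general
    (P Q R : ℂ) (hPQ : dist P Q = 1) (hQR : dist Q R = 1) (hPR : dist P R = 1)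
    (X₀ : Set ℂ) (hX₀ : X₀ = convexHull ℝ {P, Q, R})
    (n : ℕ) (S : Fin (4 ^ n) → Set ℂ)
    (hS : ∀ i, ∃ p q r : ℂ,
      dist p q = 1 / 2 ^ n ∧ dist q r = 1 / 2 ^ n ∧ dist p r = 1 / 2 ^ n ∧
      S i = convexHull ℝ {p, q, r})
    (hcover : X₀ = ⋃ i, S i)
    (g : ℂ → ℂ)
    (haff : ∀ i, ∃ f : ℂ →ᵃ[ℝ] ℂ, Set.EqOn g f (S i))
    (hdisk : ∀ i, ∃ c : ℂ, g '' S i ⊆ Metric.closedBall c (1 / 2 ^ (n + 1))) :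
    volume (g '' X₀) ≤ ENNReal.ofReal (3 / 4) * volume X₀ := by
  set ρ : ℝ := 1 / 2 ^ (n + 1)
  set T := convexHull ℝ ({0, 1, I} : Set ℂ)
  have hpiece (i : Fin (4 ^ n)) :
      volume (g '' S i) ≤ ENNReal.ofReal (3 * √3 / 2 * ρ ^ 2) * volume T := by
    obtain ⟨p, q, r, -, -, -, hSi⟩ := hS i
    obtain ⟨f, hf⟩ := haff i
    obtain ⟨c, hc⟩ := hdisk i
    rw [hSi] at hf hc ⊢
    exact volume_image_convexHull_le_of_eqOn_affineMap hf hc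
  calc volume (g '' X₀) ≤ ∑ i, volume (g '' S i) := by
        rw [hcover, image_iUnion]
        exact measure_iUnion_fintype_le _ _
    _ ≤ ∑ _i : Fin (4 ^ n), ENNReal.ofReal (3 * √3 / 2 * ρ ^ 2) * volume T :=
        Finset.sum_le_sum fun i _ => hpiece i
    _ = ENNReal.ofReal (3 / 4) * volume X₀ := by
        rw [hX₀, volume_convexHull_of_dist_eq hPQ hQR hPR, Finset.sum_const, Finset.card_univ,
          Fintype.card_fin, nsmul_eq_mul, ← mul_assoc, ← mul_assoc, ← ENNReal.ofReal_natCast,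
          ← ENNReal.ofReal_mul (by positivity), ← ENNReal.ofReal_mul (by positivity)]
        congr 2
        simp only [ρ]
        field_simp
        push_cast
        rw [← pow_mul, pow_mul', pow_succ]
        norm_num

/-- Let `X₀` be a solid equilateral triangle in `ℂ` with side length `1` centered at the
origin, written as a union of `4^n` equilateral sub-triangles of side length `1/2^n`.
If `g : ℂ → ℂ` is affine on each sub-triangle `S` and maps each sub-triangle into a
closed disk of radius `1/2^(n+1)`, then the area of `g(X₀)` is at most `3/4` times the
area of `X₀`. -/
theorem affine_image_area_bound
    (P Q R : ℂ) (hPQ : dist P Q = 1) (hQR : dist Q R = 1) (hPR : dist P R = 1)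
    (hcenter : P + Q + R = 0)
    (X₀ : Set ℂ) (hX₀ : X₀ = convexHull ℝ {P, Q, R})
    (n : ℕ) (S : Fin (4 ^ n) → Set ℂ)
    (hS : ∀ i, ∃ p q r : ℂ,
      dist p q = 1 / 2 ^ n ∧ dist q r = 1 / 2 ^ n ∧ dist p r = 1 / 2 ^ n ∧
      S i = convexHull ℝ {p, q, r})
    (hcover : X₀ = ⋃ i, S i)
    (g : ℂ → ℂ)
    (haff : ∀ i, ∃ f : ℂ →ᵃ[ℝ] ℂ, Set.EqOn g f (S i))
    (hdisk : ∀ i, ∃ c : ℂ, g '' S i ⊆ Metric.closedBall c (1 / 2 ^ (n + 1))) :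
    volume (g '' X₀) ≤ ENNReal.ofReal (3 / 4) * volume X₀ :=
  affine_image_area_bound_general P Q R hPQ hQR hPR X₀ hX₀ n S hS hcover g haff hdisk
end

section
/- Let A and B be unital Banach algebras with units e_A and e_B, both embedded linearly isometrically in a normed space V. Let X ⊆ A and Y ⊆ B be subsets containing R·e_A and R·e_B respectively (R > 0) and contained in the balls of radius R, with X and Y compact, and set d = dist_H^{V⊕V⊕V}(X^m, Y^m) with the max-norm. Then R²·‖e_A − e_B‖_V ≤ (4R + 1)·d. -/
/-- Let `A` and `B` be unital Banach algebras embedded linearly isometrically into a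
normed space `V`, and let `X ⊆ A`, `Y ⊆ B` be compact subsets containing `R·1` and
consisting of elements of norm at most `R` (`R > 0`). If `d` denotes the Hausdorff
distance in `V ⊕ V ⊕ V` (max-norm) between the multiplication graphs `X^m` and `Y^m`,
then `R²·‖1_A − 1_B‖_V ≤ (4R + 1)·d`. -/
theorem unit_distance_bound_from_mul_graphs
    {A B V : Type*} [NormedRing A] [NormedAlgebra ℝ A] [CompleteSpace A]
    [NormedRing B] [NormedAlgebra ℝ B] [CompleteSpace B]
    [NormedAddCommGroup V] [NormedSpace ℝ V]
    (ιA : A →ₗᵢ[ℝ] V) (ιB : B →ₗᵢ[ℝ] V)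
    (X : Set A) (Y : Set B) (R : ℝ) (hR : 0 < R)
    (hXc : IsCompact X) (hYc : IsCompact Y)
    (hXe : R • (1 : A) ∈ X) (hYe : R • (1 : B) ∈ Y)
    (hXb : ∀ x ∈ X, ‖x‖ ≤ R) (hYb : ∀ y ∈ Y, ‖y‖ ≤ R) :
    R ^ 2 * ‖ιA 1 - ιB 1‖ ≤
      (4 * R + 1) * Metric.hausdorffDist
        ((fun p : A × A => (ιA p.1, ιA p.2, ιA (p.1 * p.2))) '' (X ×ˢ X))
        ((fun p : B × B => (ιB p.1, ιB p.2, ιB (p.1 * p.2))) '' (Y ×ˢ Y)) := by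
  classical
  set f : A × A → V × V × V := fun p => (ιA p.1, ιA p.2, ιA (p.1 * p.2)) with hf
  set g : B × B → V × V × V := fun p => (ιB p.1, ιB p.2, ιB (p.1 * p.2)) with hg
  have hfc : Continuous f :=
    (ιA.continuous.comp continuous_fst).prodMk
      ((ιA.continuous.comp continuous_snd).prodMk
        (ιA.continuous.comp (continuous_fst.mul continuous_snd)))
  have hgc : Continuous g :=
    (ιB.continuous.comp continuous_fst).prodMk
      ((ιB.continuous.comp continuous_snd).prodMk
        (ιB.continuous.comp (continuous_fst.mul continuous_snd)))
  set Xm := f '' (X ×ˢ X) with hXm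
  set Ym := g '' (Y ×ˢ Y) with hYm
  have hXmc : IsCompact Xm := (hXc.prod hXc).image hfc
  have hYmc : IsCompact Ym := (hYc.prod hYc).image hgc
  have hXmne : Xm.Nonempty := ⟨_, Set.mem_image_of_mem f (Set.mk_mem_prod hXe hXe)⟩
  have hYmne : Ym.Nonempty := ⟨_, Set.mem_image_of_mem g (Set.mk_mem_prod hYe hYe)⟩
  have hetop : EMetric.hausdorffEdist Xm Ym ≠ ⊤ :=
    Metric.hausdorffEdist_ne_top_of_nonempty_of_bounded hXmne hYmne
      hXmc.isBounded hYmc.isBounded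
  set d := Metric.hausdorffDist Xm Ym with hd
  have hd0 : 0 ≤ d := Metric.hausdorffDist_nonneg
  -- component bounds for the max-metric on V × V × V
  have hc1 : ∀ u v : V × V × V, dist u.1 v.1 ≤ dist u v := fun u v => by
    rw [Prod.dist_eq]; exact le_max_left _ _
  have hc2 : ∀ u v : V × V × V, dist u.2.1 v.2.1 ≤ dist u v := fun u v => by
    rw [Prod.dist_eq]
    exact le_trans (by rw [Prod.dist_eq]; exact le_max_left _ _) (le_max_right _ _)
  have hc3 : ∀ u v : V × V × V, dist u.2.2 v.2.2 ≤ dist u v := fun u v => by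
    rw [Prod.dist_eq]
    exact le_trans (by rw [Prod.dist_eq]; exact le_max_right _ _) (le_max_right _ _)
  -- Step 1: approximate f (R•1, R•1) ∈ Xm by a point of Ym
  obtain ⟨y0, hy0Y, hy0d⟩ :=
    hYmc.exists_infDist_eq_dist hYmne (f (R • (1 : A), R • (1 : A)))
  have hdy0 : dist (f (R • (1 : A), R • (1 : A))) y0 ≤ d := by
    rw [← hy0d]
    exact Metric.infDist_le_hausdorffDist_of_mem
      (Set.mem_image_of_mem f (Set.mk_mem_prod hXe hXe)) hetop
  obtain ⟨⟨b, b'⟩, hbY, hbeq⟩ := hy0Y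
  rw [← hbeq] at hdy0
  have h1 : dist (ιA (R • (1 : A))) (ιB b) ≤ d := by
    have := le_trans (hc1 (f (R • (1 : A), R • (1 : A))) (g (b, b'))) hdy0
    simpa [hf, hg] using this
  -- Step 2: approximate g (R•1, b) ∈ Ym by a point of Xm
  obtain ⟨x1, hx1X, hx1d⟩ :=
    hXmc.exists_infDist_eq_dist hXmne (g (R • (1 : B), b))
  have hdx1 : dist (g (R • (1 : B), b)) x1 ≤ d := by
    rw [← hx1d, hd, Metric.hausdorffDist_comm]
    exact Metric.infDist_le_hausdorffDist_of_mem
      (Set.mem_image_of_mem g (Set.mk_mem_prod hYe hbY.1))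
      (by rwa [EMetric.hausdorffEdist_comm])
  obtain ⟨⟨a, a'⟩, haX, haeq⟩ := hx1X
  rw [← haeq] at hdx1
  have h2a : dist (ιB (R • (1 : B))) (ιA a) ≤ d := by
    have := le_trans (hc1 (g (R • (1 : B), b)) (f (a, a'))) hdx1
    simpa [hf, hg] using this
  have h2b : dist (ιB b) (ιA a') ≤ d := by
    have := le_trans (hc2 (g (R • (1 : B), b)) (f (a, a'))) hdx1
    simpa [hf, hg] using this
  have h2c : dist (ιB ((R • (1 : B)) * b)) (ιA (a * a')) ≤ d := by
    have := le_trans (hc3 (g (R • (1 : B), b)) (f (a, a'))) hdx1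
    simpa [hf, hg] using this
  have h2c' : dist (ιB (R • b)) (ιA (a * a')) ≤ d := by
    rwa [smul_mul_assoc, one_mul] at h2c
  -- individual estimates
  have T1 : dist (ιA ((R * R) • (1 : A))) (ιB (R • b)) ≤ R * d := by
    rw [show ((R * R) • (1 : A)) = R • (R • (1 : A)) by rw [smul_smul],
      ιA.map_smul, ιB.map_smul, dist_smul₀,
      Real.norm_eq_abs, abs_of_pos hR]
    exact mul_le_mul_of_nonneg_left h1 hR.le
  have T3 : dist (ιA (a * a')) (ιA (R • a)) ≤ R * (d + d) := by
    rw [ιA.dist_map, dist_eq_norm,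
      show a * a' - R • a = a * (a' - R • (1 : A)) by
        rw [mul_sub, mul_smul_comm, mul_one]]
    have hb1 : ‖a' - R • (1 : A)‖ ≤ d + d := by
      rw [← dist_eq_norm, ← ιA.dist_map]
      calc dist (ιA a') (ιA (R • (1 : A)))
          ≤ dist (ιA a') (ιB b) + dist (ιB b) (ιA (R • (1 : A))) := dist_triangle _ _ _
        _ ≤ d + d := add_le_add (by rw [dist_comm]; exact h2b) (by rw [dist_comm]; exact h1)
    calc ‖a * (a' - R • (1 : A))‖ ≤ ‖a‖ * ‖a' - R • (1 : A)‖ := norm_mul_le _ _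
      _ ≤ R * (d + d) := mul_le_mul (hXb a haX.1) hb1 (norm_nonneg _)
          hR.le
  have T4 : dist (ιA (R • a)) (ιB ((R * R) • (1 : B))) ≤ R * d := by
    rw [show ((R * R) • (1 : B)) = R • (R • (1 : B)) by rw [smul_smul],
      ιA.map_smul, ιB.map_smul, dist_smul₀,
      Real.norm_eq_abs, abs_of_pos hR]
    exact mul_le_mul_of_nonneg_left (by rw [dist_comm]; exact h2a) hR.le
  -- assemble
  have hmain : dist (ιA ((R * R) • (1 : A))) (ιB ((R * R) • (1 : B))) ≤ (4 * R + 1) * d := by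
    have t4 := dist_triangle4 (ιA ((R * R) • (1 : A))) (ιB (R • b)) (ιA (a * a'))
      (ιB ((R * R) • (1 : B)))
    have t1 := dist_triangle (ιA (a * a')) (ιA (R • a)) (ιB ((R * R) • (1 : B)))
    nlinarith [T1, T3, T4, h2c']
  calc R ^ 2 * ‖ιA 1 - ιB 1‖
      = dist (ιA ((R * R) • (1 : A))) (ιB ((R * R) • (1 : B))) := by
        rw [dist_eq_norm, ιA.map_smul, ιB.map_smul, ← smul_sub,
          norm_smul, Real.norm_eq_abs, abs_of_pos (by positivity), sq]
    _ ≤ (4 * R + 1) * d := hmain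
end
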